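/- The polyache statistic h_{2,2} is an unbiased estimator of μ_2^2 (the square of the variance): for N ≥ 4 i.i.d. samples, E[h_{2,2}] = Var(X)^2, where h_{2,2} := (1/(N(N−1)(N−2)(N−3)))(S_1^4 − 2N S_1^2 S_2 + (N^2−3N+3)S_2^2 + (4N−4)S_1 S_3 + (−N^2+N)S_4). -/

import Mathlib

/-!
Up to a factor `4`, the numerator of `h_{2,2}` is `∑ (x_i - x_j)² (x_k - x_l)²` over ordered
quadruples of distinct indices: the terms with `i = j` or `k = l` vanish, so the sum may be taken
over all `i, j` and all `k, l ∉ {i, j}`. For distinct indices `(X_i - X_j)²` and `(X_k - X_l)²`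
are independent with mean `2 Var X` each, so each of the `N(N-1)(N-2)(N-3)` terms has expectation
`4 (Var X)²`.
-/

open MeasureTheory ProbabilityTheory Finset

theorem Finset.sum_sum_eq_card_mul_card_sub_one_mul {ι R : Type*} [DecidableEq ι] [CommRing R]
    {s : Finset ι} {f : ι → ι → R} {a : R} (hdiag : ∀ k ∈ s, f k k = 0)
    (hoffDiag : ∀ k ∈ s, ∀ l ∈ s, k ≠ l → f k l = a) :
    ∑ k ∈ s, ∑ l ∈ s, f k l = #s * (#s - 1) * a := by
  have hrow : ∀ k ∈ s, ∑ l ∈ s, f k l = (#s - 1) * a := fun k hk => by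
    rw [← add_sum_erase s _ hk, hdiag k hk, zero_add,
      sum_congr rfl fun l hl => hoffDiag k hk l (mem_of_mem_erase hl) (ne_of_mem_erase hl).symm,
      sum_const, card_erase_of_mem hk, nsmul_eq_mul, Nat.cast_pred (card_pos.2 ⟨k, hk⟩)]
  rw [sum_congr rfl hrow, sum_const, nsmul_eq_mul, mul_assoc]

section Algebra

variable {ι : Type*} [Fintype ι] [DecidableEq ι]

theorem sum_sdiff_pair_sum_sdiff_pair {R : Type*} [CommRing R] {f : ι → ι → R}
    (hsymm : ∀ k l, f k l = f l k) (hdiag : ∀ k, f k k = 0) {i j : ι} (hij : i ≠ j) :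
    ∑ k ∈ univ \ {i, j}, ∑ l ∈ univ \ {i, j}, f k l
      = ∑ k, ∑ l, f k l - 2 * ∑ l, f i l - 2 * ∑ l, f j l + 2 * f i j := by
  have hpair : ∀ g : ι → R, ∑ k ∈ univ \ {i, j}, g k = ∑ k, g k - g i - g j := fun g => by
    rw [sum_sdiff_eq_sub (subset_univ _), sum_pair hij]; ring
  have hcol : ∀ m, ∑ k, f k m = ∑ l, f m l := fun m => sum_congr rfl fun k _ => hsymm k m
  simp only [hpair, sum_sub_distrib, hdiag, hcol, hsymm j i]
  ring

theorem sum_sub_sq_mul_sum_sdiff_pair (x : ι → ℝ) :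
    ∑ i, ∑ j, (x i - x j) ^ 2 * ∑ k ∈ univ \ {i, j}, ∑ l ∈ univ \ {i, j}, (x k - x l) ^ 2
      = 4 * ((∑ i, x i) ^ 4 - 2 * (Fintype.card ι : ℝ) * (∑ i, x i) ^ 2 * (∑ i, x i ^ 2)
          + ((Fintype.card ι : ℝ) ^ 2 - 3 * Fintype.card ι + 3) * (∑ i, x i ^ 2) ^ 2
          + (4 * (Fintype.card ι : ℝ) - 4) * (∑ i, x i) * (∑ i, x i ^ 3)
          + (-(Fintype.card ι : ℝ) ^ 2 + Fintype.card ι) * (∑ i, x i ^ 4)) := by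
  have hinner : ∀ i j,
      (x i - x j) ^ 2 * ∑ k ∈ univ \ {i, j}, ∑ l ∈ univ \ {i, j}, (x k - x l) ^ 2
        = (x i - x j) ^ 2 * (∑ k, ∑ l, (x k - x l) ^ 2 - 2 * ∑ l, (x i - x l) ^ 2
            - 2 * ∑ l, (x j - x l) ^ 2 + 2 * (x i - x j) ^ 2) := fun i j => by
    rcases eq_or_ne i j with rfl | hij
    · simp
    · rw [sum_sdiff_pair_sum_sdiff_pair (fun k l => by ring) (fun k => by ring) hij]
  have hrow : ∀ i, ∑ l, (x i - x l) ^ 2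
      = Fintype.card ι * x i ^ 2 - 2 * x i * ∑ l, x l + ∑ l, x l ^ 2 := fun i => by
    simp only [sub_sq, sum_add_distrib, sum_sub_distrib, ← mul_sum, sum_const, card_univ,
      nsmul_eq_mul]
  simp only [hinner, hrow]
  ring_nf
  simp only [sum_add_distrib, sum_sub_distrib, ← mul_sum, ← sum_mul, sum_const, card_univ,
    nsmul_eq_mul]
  ring

end Algebra

theorem MeasureTheory.MemLp.sq_of_four {Ω : Type*} {mΩ : MeasurableSpace Ω} {μ : Measure Ω}
    {f : Ω → ℝ} (hf : MemLp f 4 μ) : MemLp (fun ω => f ω ^ 2) 2 μ := by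
  have : ENNReal.HolderTriple 4 4 2 := ⟨by
    rw [← two_mul, show (4 : ENNReal) = 2 * 2 by norm_num, ENNReal.mul_inv (by simp) (by simp),
      ← mul_assoc, ENNReal.mul_inv_cancel (by simp) (by simp), one_mul]⟩
  rw [show (fun ω => f ω ^ 2) = f * f from funext fun ω => sq (f ω)]
  exact hf.mul hf

namespace ProbabilityTheory

variable {Ω : Type*} {mΩ : MeasurableSpace Ω} {μ : Measure Ω}

theorem IndepFun.integral_sub_sq_of_identDistrib [IsFiniteMeasure μ] {X Y : Ω → ℝ} (hX : MemLp X 2 μ)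
    (hY : MemLp Y 2 μ) (hXY : X ⟂ᵢ[μ] Y) (hident : IdentDistrib X Y μ μ) :
    ∫ ω, (X ω - Y ω) ^ 2 ∂μ = 2 * Var[X; μ] := by
  have hmean : μ[fun ω => X ω - Y ω] = 0 := by
    rw [integral_sub (hX.integrable one_le_two) (hY.integrable one_le_two), hident.integral_eq,
      sub_self]
  calc ∫ ω, (X ω - Y ω) ^ 2 ∂μ = Var[fun ω => X ω - Y ω; μ] :=
        (variance_of_integral_eq_zero (hX.sub hY).aemeasurable hmean).symm
    _ = 2 * Var[X; μ] := by
        rw [variance_fun_sub hX hY, hXY.covariance_eq_zero hX hY, ← hident.variance_eq]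
        ring

variable {ι : Type*} {X : ι → Ω → ℝ} {i₀ : ι}

theorem integrable_sub_sq_mul_sub_sq (hL4 : ∀ i, MemLp (X i) 4 μ) (i j k l : ι) :
    Integrable (fun ω => (X i ω - X j ω) ^ 2 * (X k ω - X l ω) ^ 2) μ :=
  ((hL4 i).sub (hL4 j)).sq_of_four.integrable_mul ((hL4 k).sub (hL4 l)).sq_of_four

variable [IsFiniteMeasure μ]

theorem iIndepFun.integral_sub_sq_mul_sub_sq (hindep : iIndepFun X μ)
    (hident : ∀ i, IdentDistrib (X i) (X i₀) μ μ) (hL2 : ∀ i, MemLp (X i) 2 μ) {i j k l : ι}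
    (hij : i ≠ j) (hkl : k ≠ l) (hik : i ≠ k) (hil : i ≠ l) (hjk : j ≠ k) (hjl : j ≠ l) :
    ∫ ω, (X i ω - X j ω) ^ 2 * (X k ω - X l ω) ^ 2 ∂μ = (2 * Var[X i₀; μ]) ^ 2 := by
  have hmean : ∀ {a b}, a ≠ b → ∫ ω, (X a ω - X b ω) ^ 2 ∂μ = 2 * Var[X i₀; μ] := fun hab => by
    rw [(hindep.indepFun hab).integral_sub_sq_of_identDistrib (hL2 _) (hL2 _)
      ((hident _).trans (hident _).symm), (hident _).variance_eq]
  have hmeas : ∀ a, AEMeasurable (X a) μ := fun a => (hL2 a).aestronglyMeasurable.aemeasurable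
  have hsq : Measurable fun p : ℝ × ℝ => (p.1 - p.2) ^ 2 := by fun_prop
  have hpairs : (fun ω => (X i ω - X j ω) ^ 2) ⟂ᵢ[μ] (fun ω => (X k ω - X l ω) ^ 2) :=
    (hindep.indepFun_prodMk_prodMk₀ hmeas i j k l hik hil hjk hjl).comp hsq hsq
  rw [hpairs.integral_fun_mul_eq_mul_integral (by fun_prop) (by fun_prop), hmean hij, hmean hkl,
    sq]

variable [Fintype ι] [DecidableEq ι]

theorem iIndepFun.integral_sub_sq_mul_sum_sdiff_pair (hindep : iIndepFun X μ)
    (hident : ∀ i, IdentDistrib (X i) (X i₀) μ μ) (hL4 : ∀ i, MemLp (X i) 4 μ) {i j : ι}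
    (hij : i ≠ j) :
    ∫ ω, (X i ω - X j ω) ^ 2 * ∑ k ∈ univ \ {i, j}, ∑ l ∈ univ \ {i, j}, (X k ω - X l ω) ^ 2 ∂μ
      = (Fintype.card ι - 2) * (Fintype.card ι - 3) * (2 * Var[X i₀; μ]) ^ 2 := by
  have hcard : (#(univ \ {i, j}) : ℝ) = Fintype.card ι - 2 := by
    rw [card_sdiff_of_subset (subset_univ _), card_pair hij, card_univ,
      Nat.cast_sub (card_pair hij ▸ card_le_univ {i, j})]
    norm_num
  have hint := integrable_sub_sq_mul_sub_sq hL4 i j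
  simp only [mul_sum]
  rw [integral_finsetSum _ fun k _ => integrable_finsetSum _ fun l _ => hint k l,
    sum_congr rfl fun k _ => integral_finsetSum _ fun l _ => hint k l,
    sum_sum_eq_card_mul_card_sub_one_mul (a := (2 * Var[X i₀; μ]) ^ 2) (by simp) ?_, hcard]
  · ring
  intro k hk l hl hkl
  simp only [mem_sdiff, mem_univ, mem_insert, mem_singleton, true_and, not_or] at hk hl
  exact hindep.integral_sub_sq_mul_sub_sq hident (fun i => (hL4 i).mono_exponent (by norm_num))
    hij hkl (Ne.symm hk.1) (Ne.symm hl.1) (Ne.symm hk.2) (Ne.symm hl.2)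

theorem iIndepFun.integral_sum_sub_sq_mul_sum_sdiff_pair (hindep : iIndepFun X μ)
    (hident : ∀ i, IdentDistrib (X i) (X i₀) μ μ) (hL4 : ∀ i, MemLp (X i) 4 μ) :
    ∫ ω, ∑ i, ∑ j, (X i ω - X j ω) ^ 2 *
        ∑ k ∈ univ \ {i, j}, ∑ l ∈ univ \ {i, j}, (X k ω - X l ω) ^ 2 ∂μ
      = Fintype.card ι * (Fintype.card ι - 1) *
          ((Fintype.card ι - 2) * (Fintype.card ι - 3) * (2 * Var[X i₀; μ]) ^ 2) := by
  have hint : ∀ i j, Integrable (fun ω => (X i ω - X j ω) ^ 2 *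
      ∑ k ∈ univ \ {i, j}, ∑ l ∈ univ \ {i, j}, (X k ω - X l ω) ^ 2) μ := fun i j => by
    simp only [mul_sum]
    exact integrable_finsetSum _ fun k _ => integrable_finsetSum _ fun l _ =>
      integrable_sub_sq_mul_sub_sq hL4 i j k l
  rw [integral_finsetSum _ fun i _ => integrable_finsetSum _ fun j _ => hint i j,
    sum_congr rfl fun i _ => integral_finsetSum _ fun j _ => hint i j,
    sum_sum_eq_card_mul_card_sub_one_mul (by simp)
      fun i _ j _ hij => hindep.integral_sub_sq_mul_sum_sdiff_pair hident hL4 hij,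
    card_univ]

end ProbabilityTheory

/-- The polyache statistic `h_{2,2}` is an unbiased estimator of `μ₂² = Var(X)²`:
for `N ≥ 4` i.i.d. samples, `E[h_{2,2}] = Var(X)²`, where `h_{2,2}` is expressed via the
power sums `S r = ∑ i, (X i)^r`. -/
theorem h22_unbiased {Ω : Type*} [MeasureSpace Ω]
    [IsProbabilityMeasure (ℙ : Measure Ω)]
    (N : ℕ) (hN : 4 ≤ N) (X : Fin N → Ω → ℝ)
    (hindep : iIndepFun X ℙ)
    (hident : ∀ i, IdentDistrib (X i) (X ⟨0, by omega⟩) ℙ ℙ)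
    (hL4 : ∀ i, MemLp (X i) 4 ℙ)
    (S : ℕ → Ω → ℝ) (hS : ∀ r ω, S r ω = ∑ i, (X i ω) ^ r) :
    ∫ ω, ((N : ℝ) * ((N : ℝ) - 1) * ((N : ℝ) - 2) * ((N : ℝ) - 3))⁻¹ *
        ((S 1 ω) ^ 4 - 2 * N * (S 1 ω) ^ 2 * S 2 ω + ((N : ℝ) ^ 2 - 3 * N + 3) * (S 2 ω) ^ 2 +
          (4 * (N : ℝ) - 4) * S 1 ω * S 3 ω + (-(N : ℝ) ^ 2 + N) * S 4 ω) ∂ℙ =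
      (variance (X ⟨0, by omega⟩) ℙ) ^ 2 := by
  have hN' : (4 : ℝ) ≤ N := by exact_mod_cast hN
  have h0 : (N : ℝ) ≠ 0 := by linarith
  have h1 : (N : ℝ) - 1 ≠ 0 := by linarith
  have h2 : (N : ℝ) - 2 ≠ 0 := by linarith
  have h3 : (N : ℝ) - 3 ≠ 0 := by linarith
  simp only [hS, pow_one]
  calc _ = ∫ ω, ((N : ℝ) * ((N : ℝ) - 1) * ((N : ℝ) - 2) * ((N : ℝ) - 3))⁻¹ * (4⁻¹ *
          ∑ i, ∑ j, (X i ω - X j ω) ^ 2 *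
            ∑ k ∈ univ \ {i, j}, ∑ l ∈ univ \ {i, j}, (X k ω - X l ω) ^ 2) ∂ℙ := by
        congr 1 with ω
        rw [sum_sub_sq_mul_sum_sdiff_pair, Fintype.card_fin]
        ring
    _ = _ := by
        rw [integral_const_mul, integral_const_mul,
          hindep.integral_sum_sub_sq_mul_sum_sdiff_pair hident hL4, Fintype.card_fin]
        field_simp
        ring
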